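/- arXiv:2203.05854 — 6 statements merged into one kernel-verified Lean document; each statement's English description precedes it below -/
import Mathlib

section
/- Let m > 0 and p₁, p₂ be on the positive-energy mass shell of mass m, i.e. pᵢ = (√(|𝐩ᵢ|² + m²), 𝐩ᵢ). Then for 𝐩₁ ≠ 𝐩₂, 0 ≤ |𝐩₁ - 𝐩₂|² / (-(p₁ - p₂)²) ≤ (|𝐩₁|² + |𝐩₂|² + 2m²)/(2m²). -/
/-!
Write `x = ‖𝐩₁‖`, `y = ‖𝐩₂‖`, `s = ⟪𝐩₁, 𝐩₂⟫` and `ω(x) = √(x² + m²)`. Then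
`-(p₁ - p₂)² = 2 (ω(x) ω(y) - m² - s)`, so the claim reduces to the scalar inequality
`m² (x² + y² - 2s) ≤ (ω(x) ω(y) - m² - s)(x² + y² + 2m²)`. After moving the square root to one
side and squaring, the difference of the two sides is an explicit sum of nonnegative terms,
nonnegativity of the last two coming from the Cauchy–Schwarz bound `|s| ≤ x y`.
-/

open Real

lemma sq_mul_sub_le_sqrt_mul_sqrt_sub_mul {x y s m : ℝ} (hs : |s| ≤ x * y) :
    m ^ 2 * (x ^ 2 + y ^ 2 - 2 * s) ≤
      (√(x ^ 2 + m ^ 2) * √(y ^ 2 + m ^ 2) - m ^ 2 - s) * (x ^ 2 + y ^ 2 + 2 * m ^ 2) := by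
  obtain ⟨hs_lower, hs_upper⟩ := abs_le.mp hs
  set S := x ^ 2 + y ^ 2 + 2 * m ^ 2
  have hS : 0 ≤ S := by positivity
  have hsqrt : √(x ^ 2 + m ^ 2) * √(y ^ 2 + m ^ 2) * S
      = √((x ^ 2 + m ^ 2) * (y ^ 2 + m ^ 2) * (S * S)) := by
    rw [sqrt_mul (by positivity), sqrt_mul (by positivity), sqrt_mul_self hS]
  have hsos : (x ^ 2 + m ^ 2) * (y ^ 2 + m ^ 2) * (S * S)
      - (2 * m ^ 2 * (x ^ 2 + y ^ 2) + 2 * m ^ 4 + s * (x ^ 2 + y ^ 2)) ^ 2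
      = m ^ 2 * (x - y) ^ 4 * (x ^ 2 + y ^ 2 + m ^ 2)
        + (x ^ 2 + y ^ 2) ^ 2 * ((x * y - s) * (x * y + s))
        + 4 * m ^ 2 * (x ^ 2 + y ^ 2) * (x ^ 2 + y ^ 2 + m ^ 2) * (x * y - s) := by
    ring
  have hcs₁ : 0 ≤ x * y - s := by linarith
  have hcs₂ : 0 ≤ x * y + s := by linarith
  have hsq : (2 * m ^ 2 * (x ^ 2 + y ^ 2) + 2 * m ^ 4 + s * (x ^ 2 + y ^ 2)) ^ 2
      ≤ (x ^ 2 + m ^ 2) * (y ^ 2 + m ^ 2) * (S * S) := by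
    rw [← sub_nonneg, hsos]
    positivity
  have := hsqrt ▸ le_sqrt_of_sq_le hsq
  linarith

section InnerProductSpace

variable {E : Type*} [NormedAddCommGroup E] [InnerProductSpace ℝ E]

lemma neg_minkowski_sq_sub_eq (m : ℝ) (u v : E) :
    -((√(‖u‖ ^ 2 + m ^ 2) - √(‖v‖ ^ 2 + m ^ 2)) ^ 2 - ‖u - v‖ ^ 2)
      = 2 * (√(‖u‖ ^ 2 + m ^ 2) * √(‖v‖ ^ 2 + m ^ 2) - m ^ 2 - inner ℝ u v) := by
  rw [sub_sq, sq_sqrt (by positivity), sq_sqrt (by positivity), norm_sub_sq_real]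
  ring

lemma two_mul_sq_mul_norm_sub_sq_le (m : ℝ) (u v : E) :
    2 * m ^ 2 * ‖u - v‖ ^ 2 ≤
      -((√(‖u‖ ^ 2 + m ^ 2) - √(‖v‖ ^ 2 + m ^ 2)) ^ 2 - ‖u - v‖ ^ 2)
        * (‖u‖ ^ 2 + ‖v‖ ^ 2 + 2 * m ^ 2) := by
  have key := sq_mul_sub_le_sqrt_mul_sqrt_sub_mul (m := m) (abs_real_inner_le_norm u v)
  rw [neg_minkowski_sq_sub_eq, norm_sub_sq_real]
  linarith

end InnerProductSpace

theorem stmt_4_general (m : ℝ) (hm : 0 < m) (p₁ p₂ : EuclideanSpace ℝ (Fin 3)) :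
    0 ≤ ‖p₁ - p₂‖ ^ 2 /
        (-((Real.sqrt (‖p₁‖ ^ 2 + m ^ 2) - Real.sqrt (‖p₂‖ ^ 2 + m ^ 2)) ^ 2 - ‖p₁ - p₂‖ ^ 2))
    ∧ ‖p₁ - p₂‖ ^ 2 /
        (-((Real.sqrt (‖p₁‖ ^ 2 + m ^ 2) - Real.sqrt (‖p₂‖ ^ 2 + m ^ 2)) ^ 2 - ‖p₁ - p₂‖ ^ 2))
      ≤ (‖p₁‖ ^ 2 + ‖p₂‖ ^ 2 + 2 * m ^ 2) / (2 * m ^ 2) := by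
  set D := -((√(‖p₁‖ ^ 2 + m ^ 2) - √(‖p₂‖ ^ 2 + m ^ 2)) ^ 2 - ‖p₁ - p₂‖ ^ 2)
  set S := ‖p₁‖ ^ 2 + ‖p₂‖ ^ 2 + 2 * m ^ 2
  have key : 2 * m ^ 2 * ‖p₁ - p₂‖ ^ 2 ≤ D * S := two_mul_sq_mul_norm_sub_sq_le m p₁ p₂
  have hm2 : 0 < 2 * m ^ 2 := by positivity
  have hS : 0 < S := by positivity
  have hD : 0 ≤ D := nonneg_of_mul_nonneg_left (le_trans (by positivity) key) hS
  refine ⟨div_nonneg (sq_nonneg _) hD, div_le_of_le_mul₀ hD (by positivity) ?_⟩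
  rw [div_mul_eq_mul_div, le_div_iff₀ hm2]
  linarith

/-- Mass-shell estimate: 0 ≤ |𝐩₁-𝐩₂|²/(-(p₁-p₂)²) ≤ (|𝐩₁|²+|𝐩₂|²+2m²)/(2m²) for 𝐩₁ ≠ 𝐩₂. -/
theorem stmt_4 (m : ℝ) (hm : 0 < m) (p₁ p₂ : EuclideanSpace ℝ (Fin 3)) (hne : p₁ ≠ p₂) :
    0 ≤ ‖p₁ - p₂‖ ^ 2 /
        (-((Real.sqrt (‖p₁‖ ^ 2 + m ^ 2) - Real.sqrt (‖p₂‖ ^ 2 + m ^ 2)) ^ 2 - ‖p₁ - p₂‖ ^ 2))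
    ∧ ‖p₁ - p₂‖ ^ 2 /
        (-((Real.sqrt (‖p₁‖ ^ 2 + m ^ 2) - Real.sqrt (‖p₂‖ ^ 2 + m ^ 2)) ^ 2 - ‖p₁ - p₂‖ ^ 2))
      ≤ (‖p₁‖ ^ 2 + ‖p₂‖ ^ 2 + 2 * m ^ 2) / (2 * m ^ 2) :=
  stmt_4_general m hm p₁ p₂
end

section
/- Let m > 0 and p₁, p₂ on the positive mass-m shell with 𝐩₁ ≠ 𝐩₂. Then the function (𝐩₁, 𝐩₂) ↦ |𝐩₁ - 𝐩₂|²/(-(p₁-p₂)²) is bounded on every compact subset of {(𝐩₁,𝐩₂) ∈ ℝ³×ℝ³ : 𝐩₁ ≠ 𝐩₂}, with a bound given by the polynomial (|𝐩₁|² + |𝐩₂|² + 2m²)/(2m²); in particular it is majorized everywhere on its domain by a single polynomial in (𝐩₁, 𝐩₂). -/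
/-!
Write `r = |𝐩₁|`, `s = |𝐩₂|`, `d = |𝐩₁ - 𝐩₂|` and `a = p₀(𝐩₁)`, `b = p₀(𝐩₂)`, so that
`-(p₁ - p₂)² = d² - (a - b)²` and `a² + b² - 2m² = r² + s²`. The claimed bound is then equivalent
to `(a - b)² (a² + b²) ≤ d² (r² + s²)`. Since `d ≥ |r - s|` it suffices to show
`(a - b)² (a² + b²) ≤ (r - s)² (r² + s²)`; multiplying by `(a + b)²` and using
`(a - b)(a + b) = (r - s)(r + s)`, this is `rs (a² + b²) ≤ ab (r² + s²)`, which follows from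
the Cauchy–Schwarz bound `ab ≥ rs + m²` and `2rs ≤ r² + s²`.
Boundedness on compact sets follows because the majorant is continuous.
-/

section ShiftedSquares

variable {a b r s c : ℝ}

theorem mul_add_le_mul_of_sq_eq_sq_add (ha : 0 ≤ a) (hb : 0 ≤ b) (hc : 0 ≤ c)
    (ha2 : a ^ 2 = r ^ 2 + c) (hb2 : b ^ 2 = s ^ 2 + c) : r * s + c ≤ a * b := by
  have hab2 : (a * b) ^ 2 - (r * s + c) ^ 2 = c * (r - s) ^ 2 := by
    linear_combination (s ^ 2 + c) * ha2 + a ^ 2 * hb2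
  have hsq : (r * s + c) ^ 2 ≤ (a * b) ^ 2 := by
    nlinarith [mul_nonneg hc (sq_nonneg (r - s))]
  exact (abs_le_of_sq_le_sq' hsq (mul_nonneg ha hb)).2

theorem sub_sq_mul_sq_add_sq_le (ha : 0 ≤ a) (hb : 0 ≤ b) (hc : 0 ≤ c)
    (ha2 : a ^ 2 = r ^ 2 + c) (hb2 : b ^ 2 = s ^ 2 + c) :
    (a - b) ^ 2 * (a ^ 2 + b ^ 2) ≤ (r - s) ^ 2 * (r ^ 2 + s ^ 2) := by
  rcases (add_nonneg ha hb).eq_or_lt with hab | hab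
  · obtain ⟨rfl, rfl⟩ : a = 0 ∧ b = 0 := by constructor <;> linarith
    rw [ sub_zero, zero_pow two_ne_zero, zero_mul]
    positivity
  have hcs := mul_add_le_mul_of_sq_eq_sq_add ha hb hc ha2 hb2
  have hrs : r * s * (a ^ 2 + b ^ 2) ≤ a * b * (r ^ 2 + s ^ 2) := by
    nlinarith [mul_nonneg hc (sq_nonneg (r - s))]
  have hfactor : (a - b) * (a + b) = (r - s) * (r + s) := by linear_combination ha2 - hb2
  refine le_of_mul_le_mul_right ?_ (pow_pos hab 2)
  calc (a - b) ^ 2 * (a ^ 2 + b ^ 2) * (a + b) ^ 2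
      = (r - s) ^ 2 * ((r + s) ^ 2 * (a ^ 2 + b ^ 2)) := by
        linear_combination (a ^ 2 + b ^ 2) * ((a - b) * (a + b) + (r - s) * (r + s)) * hfactor
    _ ≤ (r - s) ^ 2 * ((a + b) ^ 2 * (r ^ 2 + s ^ 2)) :=
        mul_le_mul_of_nonneg_left (by nlinarith) (sq_nonneg _)
    _ = (r - s) ^ 2 * (r ^ 2 + s ^ 2) * (a + b) ^ 2 := by ring

end ShiftedSquares

theorem sq_div_sq_sub_sqrt_sub_sqrt_sq_le {r s d m : ℝ} (hm : 0 < m) (hd : 0 < d)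
    (hrs : |r - s| ≤ d) :
    d ^ 2 / (-((√(r ^ 2 + m ^ 2) - √(s ^ 2 + m ^ 2)) ^ 2 - d ^ 2))
      ≤ (r ^ 2 + s ^ 2 + 2 * m ^ 2) / (2 * m ^ 2) := by
  set a := √(r ^ 2 + m ^ 2)
  set b := √(s ^ 2 + m ^ 2)
  have ha2 : a ^ 2 = r ^ 2 + m ^ 2 := Real.sq_sqrt (by positivity)
  have hb2 : b ^ 2 = s ^ 2 + m ^ 2 := Real.sq_sqrt (by positivity)
  have hshift := sub_sq_mul_sq_add_sq_le (Real.sqrt_nonneg _) (Real.sqrt_nonneg _)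
    (sq_nonneg m) ha2 hb2
  have hrsd : (r - s) ^ 2 ≤ d ^ 2 := sq_le_sq.2 (hrs.trans (le_abs_self d))
  have hkey : (a - b) ^ 2 * (a ^ 2 + b ^ 2) ≤ d ^ 2 * (r ^ 2 + s ^ 2) :=
    hshift.trans (mul_le_mul_of_nonneg_right hrsd (by positivity))
  have hsum : 0 < a ^ 2 + b ^ 2 := by rw [ha2, hb2]; positivity
  have hden : 0 < -((a - b) ^ 2 - d ^ 2) := by nlinarith [mul_pos hm hd]
  rw [div_le_div_iff₀ hden (by positivity)]
  nlinarith

/-- The mass-shell ratio |𝐩₁-𝐩₂|²/(-(p₁-p₂)²) is bounded on compact subsets of the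
  off-diagonal set, and is everywhere majorized by the polynomial (|𝐩₁|²+|𝐩₂|²+2m²)/(2m²). -/
theorem stmt_6 (m : ℝ) (hm : 0 < m) :
    (∀ K : Set (EuclideanSpace ℝ (Fin 3) × EuclideanSpace ℝ (Fin 3)),
      IsCompact K → K ⊆ {q | q.1 ≠ q.2} →
      ∃ C : ℝ, ∀ q ∈ K,
        ‖q.1 - q.2‖ ^ 2 /
          (-((Real.sqrt (‖q.1‖ ^ 2 + m ^ 2) - Real.sqrt (‖q.2‖ ^ 2 + m ^ 2)) ^ 2
              - ‖q.1 - q.2‖ ^ 2)) ≤ C)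
    ∧ ∀ p₁ p₂ : EuclideanSpace ℝ (Fin 3), p₁ ≠ p₂ →
        ‖p₁ - p₂‖ ^ 2 /
          (-((Real.sqrt (‖p₁‖ ^ 2 + m ^ 2) - Real.sqrt (‖p₂‖ ^ 2 + m ^ 2)) ^ 2
              - ‖p₁ - p₂‖ ^ 2))
        ≤ (‖p₁‖ ^ 2 + ‖p₂‖ ^ 2 + 2 * m ^ 2) / (2 * m ^ 2) := by
  have majorant : ∀ p₁ p₂ : EuclideanSpace ℝ (Fin 3), p₁ ≠ p₂ →
      ‖p₁ - p₂‖ ^ 2 /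
        (-((Real.sqrt (‖p₁‖ ^ 2 + m ^ 2) - Real.sqrt (‖p₂‖ ^ 2 + m ^ 2)) ^ 2
            - ‖p₁ - p₂‖ ^ 2))
      ≤ (‖p₁‖ ^ 2 + ‖p₂‖ ^ 2 + 2 * m ^ 2) / (2 * m ^ 2) := fun p₁ p₂ hne =>
    sq_div_sq_sub_sqrt_sub_sqrt_sq_le hm (norm_sub_pos_iff.2 hne) (abs_norm_sub_norm_le p₁ p₂)
  refine ⟨fun K hK hKoff => ?_, majorant⟩
  obtain ⟨C, hC⟩ := hK.bddAbove_image
    (f := fun q : EuclideanSpace ℝ (Fin 3) × EuclideanSpace ℝ (Fin 3) =>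
      (‖q.1‖ ^ 2 + ‖q.2‖ ^ 2 + 2 * m ^ 2) / (2 * m ^ 2)) (by fun_prop)
  exact ⟨C, fun q hq => (majorant q.1 q.2 (hKoff hq)).trans (hC ⟨q, hq, rfl⟩)⟩
end

section
/- For m > 0 and any 𝐩, 𝐩' ∈ ℝ³ with 𝐩' ≠ 0, one has |1 / (|𝐩'|·(⟨𝐩'|𝐩⟩ - |𝐩'|·p₀(𝐩)))| < 4(m + |𝐩|)/(m²|𝐩'|²), where p₀(𝐩) = √(|𝐩|² + m²) and ⟨𝐩'|𝐩⟩ is the Euclidean inner product. -/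
/-! The Cauchy–Schwarz inequality `⟪p', p⟫ ≤ ‖p'‖ ‖p‖` bounds the modulus of the denominator from
below by `‖p'‖² (p₀ - ‖p‖)`, and rationalising, `p₀ - ‖p‖ = m² / (p₀ + ‖p‖) ≥ m² / (2‖p‖ + m)`. -/

open Real RealInnerProductSpace

lemma div_lt_sqrt_sq_add_sq_sub {r m : ℝ} (hr : 0 ≤ r) (hm : 0 < m) :
    m ^ 2 / (4 * (m + r)) < √(r ^ 2 + m ^ 2) - r := by
  set E := √(r ^ 2 + m ^ 2)
  have hE_sq : E ^ 2 = r ^ 2 + m ^ 2 := sq_sqrt (by positivity)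
  have hr_lt_E : r < E := lt_sqrt_of_sq_lt (by nlinarith)
  have hE_le : E ≤ r + m := sqrt_le_iff.mpr ⟨by positivity, by nlinarith⟩
  rw [div_lt_iff₀ (by positivity)]
  calc m ^ 2 = (E - r) * (E + r) := by nlinarith
    _ < (E - r) * (4 * (m + r)) := by gcongr; linarith

lemma sq_norm_mul_sub_norm_le {F : Type*} [NormedAddCommGroup F] [InnerProductSpace ℝ F]
    (q p : F) (t : ℝ) : ‖q‖ ^ 2 * (t - ‖p‖) ≤ ‖q‖ * (‖q‖ * t - ⟪q, p⟫) := by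
  have hcs : ⟪q, p⟫ ≤ ‖q‖ * ‖p‖ := real_inner_le_norm q p
  nlinarith [mul_le_mul_of_nonneg_left hcs (norm_nonneg q)]

/-- The estimation |1/(|𝐩'|(⟨𝐩'|𝐩⟩ - |𝐩'|p₀(𝐩)))| < 4(m+|𝐩|)/(m²|𝐩'|²) for m > 0, 𝐩' ≠ 0. -/
theorem stmt_7 (m : ℝ) (hm : 0 < m) (p p' : EuclideanSpace ℝ (Fin 3)) (hp' : p' ≠ 0) :
    |1 / (‖p'‖ * ((inner ℝ p' p : ℝ) - ‖p'‖ * Real.sqrt (‖p‖ ^ 2 + m ^ 2)))|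
      < 4 * (m + ‖p‖) / (m ^ 2 * ‖p'‖ ^ 2) := by
  have hp'_pos : 0 < ‖p'‖ := norm_pos_iff.mpr hp'
  have hlower : ‖p'‖ ^ 2 * (m ^ 2 / (4 * (m + ‖p‖))) <
      ‖p'‖ * (‖p'‖ * √(‖p‖ ^ 2 + m ^ 2) - ⟪p', p⟫) :=
    (mul_lt_mul_of_pos_left (div_lt_sqrt_sq_add_sq_sub (norm_nonneg p) hm) (by positivity)).trans_le
      (sq_norm_mul_sub_norm_le p' p _)
  have hlower_pos : 0 < ‖p'‖ ^ 2 * (m ^ 2 / (4 * (m + ‖p‖))) := by positivity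
  rw [abs_div, abs_one, abs_of_neg (by linarith), ← mul_neg, neg_sub]
  calc 1 / (‖p'‖ * (‖p'‖ * √(‖p‖ ^ 2 + m ^ 2) - ⟪p', p⟫))
      < 1 / (‖p'‖ ^ 2 * (m ^ 2 / (4 * (m + ‖p‖)))) := one_div_lt_one_div_of_lt hlower_pos hlower
    _ = 4 * (m + ‖p‖) / (m ^ 2 * ‖p'‖ ^ 2) := by field_simp
end

section
/- For k ∈ ℕ, the family of distributions on ℝ given by v ↦ 1/(v + iε)^{k+1} converges, as ε → 0⁺, in the space of tempered distributions, to the distribution v ↦ fp(1/v^{k+1}) - iπ·((-1)^k/k!)·δ^{(k)}(v), where fp denotes the finite part (principal-value-type regularization) and δ^{(k)} the k-th derivative of the Dirac delta. -/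
/-!
Integrating by parts `k` times turns `∫ φ v / (v + iε)^(k+1)` into
`(1/k!) ∫ ψ v / (v + iε)` with the Schwartz function `ψ = φ⁽ᵏ⁾`, so only `k = 0` matters. There
`1/(v + iε) = v/(v² + ε²) - i ε/(v² + ε²)`. The Poisson kernel `ε/(v² + ε²)` has mass `π` and
concentrates at `0`, which produces `-iπ ψ(0)`. The conjugate kernel `v/(v² + ε²)` and the
truncated kernel `𝟙{η ≤ |v|}/v` are odd, so against `ψ` they only see the symmetric difference
quotient `(ψ v - ψ (-v))/(2v)`, which is integrable; since both kernels times `v` tend to `1`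
boundedly, dominated convergence gives the same limit for both, the principal value.
-/

open MeasureTheory
open Filter Topology Complex Set

section General

variable {E : Type*} [NormedAddCommGroup E] [NormedSpace ℝ E]

theorem abs_div_sq_add_sq_le_inv {a v ε : ℝ} (hε : 0 < ε) (ha : |a| ≤ max |v| ε) :
    |a / (v ^ 2 + ε ^ 2)| ≤ ε⁻¹ := by
  have hden : 0 < v ^ 2 + ε ^ 2 := by positivity
  rw [abs_div, abs_of_pos hden, div_le_iff₀ hden, inv_mul_eq_div, le_div_iff₀ hε]
  rcases le_total |v| ε with h | h
  · nlinarith [max_eq_right h, abs_nonneg v, sq_abs v]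
  · nlinarith [max_eq_left h, abs_nonneg v, sq_abs v]

theorem integral_eq_integral_half_add_comp_neg {G : Type*} [MeasurableSpace G] [AddGroup G]
    [MeasurableNeg G] {μ : Measure G} [μ.IsNegInvariant] {f : G → E} (hf : Integrable f μ) :
    ∫ x, f x ∂μ = ∫ x, (2 : ℝ)⁻¹ • (f x + f (-x)) ∂μ := by
  rw [integral_smul, integral_add hf hf.comp_neg, integral_neg_eq_self, ← two_smul ℝ, smul_smul,
    inv_mul_cancel₀ two_ne_zero, one_smul]

theorem tendsto_integral_smul_of_abs_le_one {α ι : Type*} [MeasurableSpace α] {μ : Measure α}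
    {l : Filter ι} [l.IsCountablyGenerated] {m : ι → α → ℝ} {g : α → E} (hg : Integrable g μ)
    (hm_meas : ∀ t, AEStronglyMeasurable (m t) μ) (hm_le : ∀ t a, |m t a| ≤ 1)
    (hm_lim : ∀ᵐ a ∂μ, Tendsto (fun t => m t a) l (𝓝 1)) :
    Tendsto (fun t => ∫ a, m t a • g a ∂μ) l (𝓝 (∫ a, g a ∂μ)) := by
  refine tendsto_integral_filter_of_dominated_convergence (fun a => ‖g a‖)
    (.of_forall fun t => (hm_meas t).smul hg.aestronglyMeasurable)
    (.of_forall fun t => .of_forall fun a => ?_) hg.norm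
    (hm_lim.mono fun a ha => by simpa using ha.smul_const (g a))
  rw [norm_smul, Real.norm_eq_abs]
  exact mul_le_of_le_one_left (norm_nonneg _) (hm_le t a)

theorem integral_poissonKernel_smul_eq {f : ℝ → E} {ε : ℝ} (hε : 0 < ε) :
    ∫ v, (ε / (v ^ 2 + ε ^ 2)) • f v = ∫ x, (1 + x ^ 2)⁻¹ • f (ε * x) := by
  have hscale := Measure.integral_comp_mul_left (fun v => (ε / (v ^ 2 + ε ^ 2)) • f v) ε
  rw [abs_of_pos (inv_pos.2 hε)] at hscale
  rw [← smul_inv_smul₀ hε.ne' (∫ v, _), ← hscale, ← integral_smul]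
  congr 1 with x
  rw [smul_smul]
  congr 1
  field_simp
  ring

theorem tendsto_integral_poissonKernel_smul [CompleteSpace E] {f : ℝ → E} (hf : Continuous f)
    {C : ℝ} (hC : ∀ x, ‖f x‖ ≤ C) :
    Tendsto (fun ε => ∫ v, (ε / (v ^ 2 + ε ^ 2)) • f v) (𝓝[>] 0) (𝓝 (Real.pi • f 0)) := by
  have hlim : Tendsto (fun ε => ∫ x, (1 + x ^ 2)⁻¹ • f (ε * x)) (𝓝[>] 0)
      (𝓝 (∫ x : ℝ, (1 + x ^ 2)⁻¹ • f 0)) := by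
    refine tendsto_integral_filter_of_dominated_convergence (fun x => (1 + x ^ 2)⁻¹ * C)
      (.of_forall fun ε => Continuous.aestronglyMeasurable
        (by fun_prop (disch := intro x; positivity)))
      (.of_forall fun ε => .of_forall fun x => ?_)
      (integrable_inv_one_add_sq.mul_const C) (.of_forall fun x => ?_)
    · rw [norm_smul, Real.norm_of_nonneg (by positivity)]
      exact mul_le_mul_of_nonneg_left (hC _) (by positivity)
    · refine (tendsto_const_nhds.smul ((hf.tendsto' 0 _ (by simp)).comp ?_)).mono_left
        nhdsWithin_le_nhds
      simpa using (continuous_mul_const x).tendsto 0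
  rw [integral_smul_const, integral_univ_inv_one_add_sq] at hlim
  exact hlim.congr' (eventually_nhdsWithin_of_forall fun ε hε =>
    (integral_poissonKernel_smul_eq hε).symm)

noncomputable def symmDiffQuot (f : ℝ → E) (v : ℝ) : E := (2 * v)⁻¹ • (f v - f (-v))

theorem integral_odd_smul_eq_integral_smul_symmDiffQuot {K : ℝ → ℝ} (hK : ∀ v, K (-v) = -K v)
    {f : ℝ → E} (hf : Integrable (fun v => K v • f v)) :
    ∫ v, K v • f v = ∫ v, (v * K v) • symmDiffQuot f v := by
  rw [integral_eq_integral_half_add_comp_neg hf]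
  congr 1 with v
  rcases eq_or_ne v 0 with rfl | hv
  · have hK0 : K 0 = 0 := by have h := hK 0; rw [neg_zero] at h; linarith
    simp [hK0]
  · rw [symmDiffQuot, smul_smul, hK, neg_smul, ← sub_eq_add_neg, ← smul_sub, smul_smul]
    congr 1
    field_simp

theorem tendsto_integral_odd_smul {ι : Type*} {l : Filter ι} [l.IsCountablyGenerated]
    {f : ℝ → E} (hf : Integrable f) (hq : Integrable (symmDiffQuot f)) {K : ι → ℝ → ℝ}
    (hK_odd : ∀ t v, K t (-v) = -K t v) (hK_meas : ∀ t, Measurable (K t))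
    (hK_bdd : ∀ᶠ t in l, ∃ C, ∀ v, |K t v| ≤ C) (hK_le : ∀ t v, |v * K t v| ≤ 1)
    (hK_lim : ∀ v ≠ 0, Tendsto (fun t => v * K t v) l (𝓝 1)) :
    Tendsto (fun t => ∫ v, K t v • f v) l (𝓝 (∫ v, symmDiffQuot f v)) := by
  refine (tendsto_integral_smul_of_abs_le_one hq
    (fun t => (measurable_id.mul (hK_meas t)).aestronglyMeasurable) hK_le
    ((by simp [ae_iff, measure_singleton] : ∀ᵐ v : ℝ, v ≠ 0).mono hK_lim)).congr' ?_
  filter_upwards [hK_bdd] with t ⟨C, hC⟩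
  exact (integral_odd_smul_eq_integral_smul_symmDiffQuot (hK_odd t)
    (hf.bdd_smul C (hK_meas t).aestronglyMeasurable (.of_forall hC))).symm

theorem tendsto_integral_conjPoissonKernel_smul {f : ℝ → E} (hf : Integrable f)
    (hq : Integrable (symmDiffQuot f)) :
    Tendsto (fun ε => ∫ v, (v / (v ^ 2 + ε ^ 2)) • f v) (𝓝[>] 0)
      (𝓝 (∫ v, symmDiffQuot f v)) := by
  refine tendsto_integral_odd_smul hf hq (fun ε v => by rw [neg_sq, neg_div])
    (fun ε => by fun_prop)
    (eventually_nhdsWithin_of_forall fun ε hε => ⟨ε⁻¹, fun v =>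
      abs_div_sq_add_sq_le_inv hε (le_max_left _ _)⟩)
    (fun ε v => ?_) (fun v hv => ?_)
  · rw [mul_div_assoc', ← sq, abs_of_nonneg (by positivity)]
    exact div_le_one_of_le₀ (by nlinarith [sq_nonneg ε]) (by positivity)
  · have hcont : ContinuousAt (fun ε : ℝ => v * (v / (v ^ 2 + ε ^ 2))) 0 := by
      fun_prop (disch := positivity)
    have hone : v * (v / (v ^ 2 + 0 ^ 2)) = 1 := by
      rw [zero_pow two_ne_zero, add_zero]; field_simp
    simpa only [hone] using hcont.tendsto.mono_left nhdsWithin_le_nhds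

namespace SchwartzMap

theorem norm_sub_le_seminorm_derivCLM_mul (ψ : 𝓢(ℝ, E)) (x y : ℝ) :
    ‖ψ x - ψ y‖ ≤ SchwartzMap.seminorm ℝ 0 0 (derivCLM ℝ E ψ) * |x - y| := by
  have := convex_univ.norm_image_sub_le_of_norm_deriv_le (fun z _ => ψ.differentiableAt)
    (fun z _ => (derivCLM ℝ E ψ).norm_le_seminorm ℝ z) (mem_univ y) (mem_univ x)
  simpa [Real.norm_eq_abs] using this

theorem integrable_symmDiffQuot (ψ : 𝓢(ℝ, E)) : Integrable (symmDiffQuot ψ) := by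
  have hmeas : AEStronglyMeasurable (symmDiffQuot ψ) volume := by
    unfold symmDiffQuot; fun_prop
  rw [← integrableOn_univ, ← union_compl_self (Icc (-1 : ℝ) 1)]
  refine IntegrableOn.union ?_ ?_
  · refine Measure.integrableOn_of_bounded (M := SchwartzMap.seminorm ℝ 0 0 (derivCLM ℝ E ψ))
      measure_Icc_lt_top.ne hmeas (.of_forall fun v => ?_)
    rcases eq_or_ne v 0 with rfl | hv
    · simp [symmDiffQuot]
    rw [symmDiffQuot, norm_smul, norm_inv, Real.norm_eq_abs, inv_mul_le_iff₀ (by positivity)]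
    calc ‖ψ v - ψ (-v)‖ ≤ _ * |v - -v| := ψ.norm_sub_le_seminorm_derivCLM_mul v (-v)
      _ = _ := by rw [sub_neg_eq_add, ← two_mul, abs_mul, abs_two]; ring
  · refine Integrable.mono' (ψ.integrable.norm.add ψ.integrable.comp_neg.norm).integrableOn
      hmeas.restrict ((ae_restrict_iff' measurableSet_Icc.compl).2 (.of_forall fun v hv => ?_))
    have hv1 : 1 < |v| := not_le.1 fun h => hv (abs_le.1 h)
    rw [symmDiffQuot, norm_smul, norm_inv, Real.norm_eq_abs, abs_mul, abs_two]
    calc (2 * |v|)⁻¹ * ‖ψ v - ψ (-v)‖ ≤ 1 * ‖ψ v - ψ (-v)‖ := by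
          gcongr; rw [inv_le_one₀ (by positivity)]; linarith
      _ ≤ ‖ψ v‖ + ‖ψ (-v)‖ := by rw [one_mul]; exact norm_sub_le _ _

end SchwartzMap

end General

theorem div_ofReal_add_mul_I (z : ℂ) (v ε : ℝ) :
    z / (v + ε * I) = (v / (v ^ 2 + ε ^ 2)) • z - I * (ε / (v ^ 2 + ε ^ 2)) • z := by
  rcases eq_or_ne (v ^ 2 + ε ^ 2) 0 with h | h
  · have hv : v = 0 := by nlinarith [sq_nonneg v, sq_nonneg ε]
    have hε : ε = 0 := by nlinarith [sq_nonneg v, sq_nonneg ε]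
    simp [hv, hε]
  · have hw : (v : ℂ) + ε * I ≠ 0 := by
      intro hw
      apply h
      have := congrArg normSq hw
      simpa [normSq_add_mul_I, sq] using this
    have hc : (v : ℂ) ^ 2 + (ε : ℂ) ^ 2 ≠ 0 := by exact_mod_cast h
    rw [div_eq_iff hw]
    simp only [Complex.real_smul]
    push_cast
    field_simp
    linear_combination (z * ε ^ 2) * I_sq

theorem ofReal_add_mul_I_ne_zero {ε : ℝ} (hε : ε ≠ 0) (v : ℝ) : (v : ℂ) + ε * I ≠ 0 := by
  intro h
  simpa [hε] using congrArg im h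

theorem integrable_div_ofReal_add_mul_I_pow {ε : ℝ} (hε : 0 < ε) (n : ℕ) {f : ℝ → ℂ}
    (hf : Integrable f) : Integrable (fun v => f v / ((v : ℂ) + ε * I) ^ n) := by
  refine (hf.mul_bdd (c := ε⁻¹ ^ n) (by fun_prop) (.of_forall fun v => ?_)).congr
    (.of_forall fun v => (div_eq_mul_inv _ _).symm)
  rw [norm_inv, norm_pow, ← inv_pow]
  gcongr
  simpa [abs_of_pos hε] using abs_im_le_norm ((v : ℂ) + ε * I)

theorem hasDerivAt_inv_ofReal_add_mul_I_pow {ε : ℝ} (hε : ε ≠ 0) (n : ℕ) (x : ℝ) :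
    HasDerivAt (fun v : ℝ => (((v : ℂ) + ε * I) ^ (n + 1))⁻¹)
      (-((n : ℂ) + 1) / ((x : ℂ) + ε * I) ^ (n + 2)) x := by
  have hw := ofReal_add_mul_I_ne_zero hε x
  refine ((((hasDerivAt_pow (n + 1) ((x : ℂ) + ε * I)).inv (c := fun z : ℂ => z ^ (n + 1))
    (pow_ne_zero _ hw)).comp_add_const (x : ℂ) (ε * I)).comp_ofReal).congr_deriv ?_
  rw [Nat.add_sub_cancel]
  push_cast
  field_simp
  ring

theorem tendsto_setIntegral_le_abs_div {f : ℝ → ℂ} (hf : Integrable f)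
    (hq : Integrable (symmDiffQuot f)) :
    Tendsto (fun η : ℝ => ∫ v in {x : ℝ | η ≤ |x|}, f v / (v : ℂ)) (𝓝[>] 0)
      (𝓝 (∫ v, symmDiffQuot f v)) := by
  have hS : ∀ η : ℝ, MeasurableSet {x : ℝ | η ≤ |x|} := fun η =>
    measurableSet_le measurable_const measurable_abs
  refine (tendsto_integral_odd_smul hf hq
    (K := fun η => {x : ℝ | η ≤ |x|}.indicator Inv.inv) (fun η v => ?_)
    (fun η => measurable_inv.indicator (hS η)) ?_ (fun η v => ?_) (fun v hv => ?_)).congr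
    (fun η => ?_)
  · by_cases h : η ≤ |v| <;> simp [indicator, h, abs_neg]
  · refine eventually_nhdsWithin_of_forall fun η (hη : 0 < η) => ⟨η⁻¹, fun v => ?_⟩
    by_cases h : η ≤ |v|
    · simpa [indicator, h] using inv_anti₀ hη h
    · simpa [indicator, h] using (inv_pos.2 hη).le
  · by_cases h : η ≤ |v|
    · rcases eq_or_ne v 0 with rfl | hv <;> simp_all
    · simp [indicator, h]
  · refine tendsto_const_nhds.congr' ?_
    filter_upwards [Ioo_mem_nhdsGT (abs_pos.2 hv)] with η hη
    simp [indicator, hη.2.le, hv]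
  · rw [← integral_indicator (hS η)]
    congr 1 with v
    by_cases h : η ≤ |v| <;> simp [indicator, h, Complex.real_smul, div_eq_inv_mul]

namespace SchwartzMap

theorem coe_iterate_derivCLM {𝕜 F : Type*} [RCLike 𝕜] [NormedAddCommGroup F] [NormedSpace ℝ F]
    [NormedSpace 𝕜 F] (k : ℕ) (φ : 𝓢(ℝ, F)) :
    ⇑((derivCLM 𝕜 F)^[k] φ) = iteratedDeriv k φ := by
  induction k generalizing φ with
  | zero => rfl
  | succ k ih => rw [Function.iterate_succ_apply, ih, iteratedDeriv_succ']; rfl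

theorem integral_div_ofReal_add_mul_I_pow_succ_succ (φ : 𝓢(ℝ, ℂ)) {ε : ℝ} (hε : 0 < ε) (n : ℕ) :
    ∫ v, φ v / ((v : ℂ) + ε * I) ^ (n + 2)
      = ((n : ℂ) + 1)⁻¹ * ∫ v, deriv φ v / ((v : ℂ) + ε * I) ^ (n + 1) := by
  have hibp := integral_mul_deriv_eq_deriv_mul_of_integrable (u := φ)
    (v := fun v : ℝ => (((v : ℂ) + ε * I) ^ (n + 1))⁻¹)
    (fun x _ => φ.hasDerivAt x) (fun x _ => hasDerivAt_inv_ofReal_add_mul_I_pow hε.ne' n x)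
    (((integrable_div_ofReal_add_mul_I_pow hε (n + 2) φ.integrable).const_mul
      (-((n : ℂ) + 1))).congr (.of_forall fun v => by simp only [Pi.mul_apply]; ring))
    ((integrable_div_ofReal_add_mul_I_pow hε (n + 1) (derivCLM ℝ ℂ φ).integrable).congr
      (.of_forall fun v => by simp [div_eq_mul_inv]))
    ((integrable_div_ofReal_add_mul_I_pow hε (n + 1) φ.integrable).congr
      (.of_forall fun v => by simp [div_eq_mul_inv]))
  simp only [mul_div_assoc', mul_neg, neg_div, integral_neg, neg_inj, ← div_eq_mul_inv] at hibp
  simp_rw [← hibp, mul_div_right_comm _ ((n : ℂ) + 1), integral_mul_const]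
  field_simp

theorem integral_div_ofReal_add_mul_I_pow_succ (φ : 𝓢(ℝ, ℂ)) {ε : ℝ} (hε : 0 < ε) (k : ℕ) :
    ∫ v, φ v / ((v : ℂ) + ε * I) ^ (k + 1)
      = (k.factorial : ℂ)⁻¹ * ∫ v, iteratedDeriv k φ v / ((v : ℂ) + ε * I) := by
  induction k generalizing φ with
  | zero => simp
  | succ k ih =>
    rw [φ.integral_div_ofReal_add_mul_I_pow_succ_succ hε k, iteratedDeriv_succ']
    rw [show deriv φ = derivCLM ℝ ℂ φ from rfl, ih, ← mul_assoc, Nat.factorial_succ]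
    push_cast
    rw [mul_inv, mul_comm ((k : ℂ) + 1)⁻¹]

theorem tendsto_integral_div_ofReal_add_mul_I (ψ : 𝓢(ℝ, ℂ)) :
    Tendsto (fun ε : ℝ => ∫ v, ψ v / ((v : ℂ) + ε * I)) (𝓝[>] 0)
      (𝓝 ((∫ v, symmDiffQuot ψ v) - I * (Real.pi • ψ 0))) := by
  refine ((tendsto_integral_conjPoissonKernel_smul ψ.integrable ψ.integrable_symmDiffQuot).sub
    ((tendsto_integral_poissonKernel_smul ψ.continuous (ψ.norm_le_seminorm ℝ)).const_mul I)).congr'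
    (eventually_nhdsWithin_of_forall fun ε (hε : 0 < ε) => ?_)
  have hconj : Integrable (fun v : ℝ => (v / (v ^ 2 + ε ^ 2)) • ψ v) :=
    ψ.integrable.bdd_smul _ (Measurable.aestronglyMeasurable (by fun_prop))
      (.of_forall fun v => (Real.norm_eq_abs _).trans_le
        (abs_div_sq_add_sq_le_inv hε (le_max_left _ _)))
  have hpois : Integrable (fun v : ℝ => (ε / (v ^ 2 + ε ^ 2)) • ψ v) :=
    ψ.integrable.bdd_smul _ (Measurable.aestronglyMeasurable (by fun_prop))
      (.of_forall fun v => (Real.norm_eq_abs _).trans_le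
        (abs_div_sq_add_sq_le_inv hε ((abs_of_pos hε).trans_le (le_max_right _ _))))
  simp_rw [div_ofReal_add_mul_I]
  rw [integral_sub hconj (hpois.const_mul I), integral_const_mul]

end SchwartzMap

/-- The finite part is encoded as `⟨fp(1/v^{k+1}), φ⟩ = (1/k!)·pv⟨1/v, φ^{(k)}⟩` and the delta
derivative as `⟨δ^{(k)}, φ⟩ = (-1)^k φ^{(k)}(0)`. -/
theorem stmt_14 (k : ℕ) (φ : SchwartzMap ℝ ℂ) :
    ∃ P : ℂ,
      Filter.Tendsto
        (fun η : ℝ => ∫ v in {x : ℝ | η ≤ |x|}, iteratedDeriv k (⇑φ) v / (v : ℂ))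
        (nhdsWithin 0 (Set.Ioi 0)) (nhds P) ∧
      Filter.Tendsto
        (fun ε : ℝ => ∫ v : ℝ, φ v / ((v : ℂ) + (ε : ℂ) * Complex.I) ^ (k + 1))
        (nhdsWithin 0 (Set.Ioi 0))
        (nhds ((1 / (Nat.factorial k : ℂ)) * P -
          Complex.I * (Real.pi : ℂ) * ((-1 : ℂ) ^ k / (Nat.factorial k : ℂ)) *
            ((-1 : ℂ) ^ k * iteratedDeriv k (⇑φ) 0))) := by
  set ψ := (SchwartzMap.derivCLM ℂ ℂ)^[k] φ
  have hψ : ⇑ψ = iteratedDeriv k φ := SchwartzMap.coe_iterate_derivCLM k φ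
  refine ⟨∫ v, symmDiffQuot ψ v, ?_, ?_⟩
  · simpa only [hψ] using tendsto_setIntegral_le_abs_div ψ.integrable ψ.integrable_symmDiffQuot
  have hlim : Tendsto (fun ε : ℝ => ∫ v, φ v / ((v : ℂ) + ε * I) ^ (k + 1)) (𝓝[>] 0)
      (𝓝 ((k.factorial : ℂ)⁻¹ * ((∫ v, symmDiffQuot ψ v) - I * (Real.pi • ψ 0)))) := by
    refine (ψ.tendsto_integral_div_ofReal_add_mul_I.const_mul _).congr'
      (eventually_nhdsWithin_of_forall fun ε (hε : 0 < ε) => ?_)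
    beta_reduce
    rw [φ.integral_div_ofReal_add_mul_I_pow_succ hε k, hψ]
  have hsign : (-1 : ℂ) ^ k * (-1) ^ k = 1 := by rw [← mul_pow]; norm_num
  convert hlim using 2
  rw [← hψ, Complex.real_smul]
  linear_combination (-(I * Real.pi) / k.factorial * ψ 0) * hsign
end

section
/- Let m > 0, and on the open set U = {(𝐩₁,𝐩₂) ∈ ℝ³×ℝ³ : 𝐩₁ ≠ 𝐩₂} consider the time-time component T₀₀(𝐩₁,𝐩₂) = (p₁-p₂)₀(p₁-p₂)₀/((p₁-p₂)²) with pᵢ on the positive mass-m shell. Then T₀₀ = 1 + |𝐩₁-𝐩₂|²/((p₁-p₂)²), and |T₀₀(𝐩₁,𝐩₂)| ≤ (|𝐩₁|² + |𝐩₂|²)/(2m²) on U. -/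
/-! Write `a = √(P² + m²)`, `b = √(Q² + m²)` for the energies of momenta of lengths `P`, `Q`.
Then `(a - b)(a + b) = P² - Q²`, while `ab ≥ PQ + m²` makes `(a + b)²` exceed `(P + Q)²` by at
least `4m²`, and `(a + b)² ≤ 2(P² + Q² + 2m²)`. Together with `|P - Q| ≤ |𝐩₁ - 𝐩₂|` this gives the
shell estimate `2m² |𝐩₁ - 𝐩₂|² ≤ (P² + Q² + 2m²) · (-(p₁ - p₂)²)`. So `p₁ - p₂` is spacelike, and
`|T₀₀| = |𝐩₁ - 𝐩₂|² / (-(p₁ - p₂)²) - 1 ≤ (P² + Q²) / (2m²)`. -/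

theorem mul_add_sq_le_sqrt_sq_add_mul_sqrt_sq_add (P Q m : ℝ) :
    P * Q + m ^ 2 ≤ √(P ^ 2 + m ^ 2) * √(Q ^ 2 + m ^ 2) := by
  rw [← Real.sqrt_mul (by positivity)]
  refine Real.le_sqrt_of_sq_le ?_
  nlinarith [sq_nonneg (m * (P - Q))]

theorem sqrt_sq_add_le_sqrt_sq_add_add_abs_sub (P Q m : ℝ) :
    √(P ^ 2 + m ^ 2) ≤ √(Q ^ 2 + m ^ 2) + |P - Q| := by
  have hQ : |Q| ≤ √(Q ^ 2 + m ^ 2) := Real.abs_le_sqrt (by nlinarith [sq_nonneg m])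
  have hcross : Q * (P - Q) ≤ √(Q ^ 2 + m ^ 2) * |P - Q| :=
    calc Q * (P - Q) ≤ |Q| * |P - Q| := by rw [← abs_mul]; exact le_abs_self _
      _ ≤ √(Q ^ 2 + m ^ 2) * |P - Q| := by gcongr
  rw [Real.sqrt_le_iff]
  refine ⟨by positivity, ?_⟩
  nlinarith [Real.sq_sqrt (by positivity : 0 ≤ Q ^ 2 + m ^ 2), sq_abs (P - Q)]

theorem abs_sqrt_sq_add_sub_sqrt_sq_add_le (P Q m : ℝ) :
    |√(P ^ 2 + m ^ 2) - √(Q ^ 2 + m ^ 2)| ≤ |P - Q| := by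
  rw [abs_sub_le_iff]
  constructor
  · linarith [sqrt_sq_add_le_sqrt_sq_add_add_abs_sub P Q m]
  · linarith [sqrt_sq_add_le_sqrt_sq_add_add_abs_sub Q P m, abs_sub_comm P Q]

theorem mass_shell_estimate (P Q m n : ℝ) (h : (P - Q) ^ 2 ≤ n ^ 2) :
    2 * m ^ 2 * n ^ 2 ≤
      (P ^ 2 + Q ^ 2 + 2 * m ^ 2) * (n ^ 2 - (√(P ^ 2 + m ^ 2) - √(Q ^ 2 + m ^ 2)) ^ 2) := by
  set a := √(P ^ 2 + m ^ 2)
  set b := √(Q ^ 2 + m ^ 2)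
  have ha : a ^ 2 = P ^ 2 + m ^ 2 := Real.sq_sqrt (by positivity)
  have hb : b ^ 2 = Q ^ 2 + m ^ 2 := Real.sq_sqrt (by positivity)
  have hab := mul_add_sq_le_sqrt_sq_add_mul_sqrt_sq_add P Q m
  have hgap_nonneg : 0 ≤ n ^ 2 - (a - b) ^ 2 := by
    have := sq_le_sq.2 (abs_sqrt_sq_add_sub_sqrt_sq_add_le P Q m)
    linarith
  have hsum_lower : (P + Q) ^ 2 + 4 * m ^ 2 ≤ (a + b) ^ 2 := by nlinarith
  have hsum_upper : (a + b) ^ 2 ≤ 2 * (P ^ 2 + Q ^ 2 + 2 * m ^ 2) := by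
    linarith [add_sq_le (a := a) (b := b)]
  have hprod : (a - b) ^ 2 * (a + b) ^ 2 ≤ (P + Q) ^ 2 * n ^ 2 := by
    have : (a - b) ^ 2 * (a + b) ^ 2 = (P + Q) ^ 2 * (P - Q) ^ 2 := by
      linear_combination ((a - b) * (a + b) + (P ^ 2 - Q ^ 2)) * (ha - hb)
    rw [this]
    gcongr
  nlinarith [mul_le_mul_of_nonneg_left hsum_upper hgap_nonneg,
    mul_le_mul_of_nonneg_left hsum_lower (sq_nonneg n)]

/-- The time-time component T₀₀ = (p₁-p₂)₀²/((p₁-p₂)²) of the transverse tensor on the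
  mass-m shell satisfies T₀₀ = 1 + |𝐩₁-𝐩₂|²/((p₁-p₂)²) and |T₀₀| ≤ (|𝐩₁|²+|𝐩₂|²)/(2m²)
  off the diagonal. -/
theorem stmt_16 (m : ℝ) (hm : 0 < m) (p₁ p₂ : EuclideanSpace ℝ (Fin 3)) (hne : p₁ ≠ p₂) :
    (Real.sqrt (‖p₁‖ ^ 2 + m ^ 2) - Real.sqrt (‖p₂‖ ^ 2 + m ^ 2)) ^ 2 /
        ((Real.sqrt (‖p₁‖ ^ 2 + m ^ 2) - Real.sqrt (‖p₂‖ ^ 2 + m ^ 2)) ^ 2 - ‖p₁ - p₂‖ ^ 2)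
      = 1 + ‖p₁ - p₂‖ ^ 2 /
        ((Real.sqrt (‖p₁‖ ^ 2 + m ^ 2) - Real.sqrt (‖p₂‖ ^ 2 + m ^ 2)) ^ 2 - ‖p₁ - p₂‖ ^ 2)
    ∧ |(Real.sqrt (‖p₁‖ ^ 2 + m ^ 2) - Real.sqrt (‖p₂‖ ^ 2 + m ^ 2)) ^ 2 /
        ((Real.sqrt (‖p₁‖ ^ 2 + m ^ 2) - Real.sqrt (‖p₂‖ ^ 2 + m ^ 2)) ^ 2 - ‖p₁ - p₂‖ ^ 2)|
      ≤ (‖p₁‖ ^ 2 + ‖p₂‖ ^ 2) / (2 * m ^ 2) := by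
  have hn : 0 < ‖p₁ - p₂‖ := norm_pos_iff.2 (sub_ne_zero.2 hne)
  have hest := mass_shell_estimate ‖p₁‖ ‖p₂‖ m ‖p₁ - p₂‖
    (sq_le_sq.2 ((abs_norm_sub_norm_le p₁ p₂).trans_eq (abs_norm _).symm))
  set D := Real.sqrt (‖p₁‖ ^ 2 + m ^ 2) - Real.sqrt (‖p₂‖ ^ 2 + m ^ 2)
  set n := ‖p₁ - p₂‖
  have hgap : 0 < n ^ 2 - D ^ 2 :=
    pos_of_mul_pos_right (hest.trans_lt' (by positivity)) (by positivity)
  have hT : D ^ 2 / (D ^ 2 - n ^ 2) = 1 + n ^ 2 / (D ^ 2 - n ^ 2) := by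
    rw [one_add_div (by linarith : D ^ 2 - n ^ 2 < 0).ne, sub_add_cancel]
  refine ⟨hT, ?_⟩
  have hT' : D ^ 2 / (D ^ 2 - n ^ 2) = -(n ^ 2 / (n ^ 2 - D ^ 2) - 1) := by
    rw [hT, ← neg_sub (n ^ 2), div_neg]
    ring
  have hratio_ge : 1 ≤ n ^ 2 / (n ^ 2 - D ^ 2) := by
    rw [one_le_div hgap]
    linarith [sq_nonneg D]
  have hratio_le : n ^ 2 / (n ^ 2 - D ^ 2) ≤ (‖p₁‖ ^ 2 + ‖p₂‖ ^ 2) / (2 * m ^ 2) + 1 := by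
    rw [div_add_one (by positivity), div_le_div_iff₀ hgap (by positivity)]
    linarith
  rw [hT', abs_neg, abs_of_nonneg (by linarith)]
  linarith
end

section
/- Along the straight line through a diagonal point (𝐩,𝐩) in direction (𝐧,-𝐧), with |𝐧| = 1 and m > 0, the limit as t → 0 of |𝐩₁-𝐩₂|²/(-(p₁-p₂)²) with 𝐩₁ = 𝐩 + t𝐧, 𝐩₂ = 𝐩 - t𝐧 equals (|𝐩|² + m²)/(|𝐩|² + m² - ⟨𝐧,𝐩⟩²); this limit attains its maximum value (|𝐩|²+m²)/m² when 𝐧 is parallel to 𝐩 and its minimum value 1 when 𝐧 ⊥ 𝐩. -/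
/-!
Write `a = p₀(𝐩 + t𝐧)` and `b = p₀(𝐩 - t𝐧)`. The quotient is `4t² / (4t² - (a - b)²)`, a `0/0`
form at `t = 0`. Rationalizing, `a - b = (a² - b²)/(a + b) = 4t⟨𝐧,𝐩⟩/(a + b)`, so after cancelling
`t²` the quotient equals `(a + b)² / ((a + b)² - 4⟨𝐧,𝐩⟩²)`, which is continuous at `t = 0` with value
`4(|𝐩|² + m²) / (4(|𝐩|² + m²) - 4⟨𝐧,𝐩⟩²)`. The bounds on the limit follow from
`0 ≤ ⟨𝐧,𝐩⟩² ≤ |𝐩|²` (Cauchy–Schwarz).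
-/

open Filter Topology
open scoped RealInnerProductSpace

/-- The mass-shell energy `p₀(𝐩)`. -/
noncomputable def shellEnergy {E : Type*} [NormedAddCommGroup E] (m : ℝ) (p : E) : ℝ :=
  Real.sqrt (‖p‖ ^ 2 + m ^ 2)

theorem div_sub_sq_eq_of_mul_eq {t c d s : ℝ} (ht : t ≠ 0) (hs : s ≠ 0)
    (h : d * s = 4 * t * c) :
    4 * t ^ 2 / (4 * t ^ 2 - d ^ 2) = s ^ 2 / (s ^ 2 - 4 * c ^ 2) := by
  have hd : 4 * t ^ 2 - d ^ 2 = 4 * t ^ 2 * (s ^ 2 - 4 * c ^ 2) / s ^ 2 := by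
    rw [eq_div_iff (pow_ne_zero 2 hs)]
    linear_combination (-(d * s) - 4 * t * c) * h
  rw [hd, div_div_eq_mul_div, mul_div_mul_left _ _ (by positivity)]

theorem sq_inner_le_sq_norm_of_norm_eq_one {E : Type*} [NormedAddCommGroup E]
    [InnerProductSpace ℝ E] {n : E} (hn : ‖n‖ = 1) (p : E) : ⟪n, p⟫ ^ 2 ≤ ‖p‖ ^ 2 :=
  sq_le_sq.2 (by simpa [hn] using abs_real_inner_le_norm n p)

namespace shellEnergy

variable {E : Type*} [NormedAddCommGroup E]

theorem sq (m : ℝ) (p : E) : shellEnergy m p ^ 2 = ‖p‖ ^ 2 + m ^ 2 :=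
  Real.sq_sqrt (by positivity)

theorem pos {m : ℝ} (hm : m ≠ 0) (p : E) : 0 < shellEnergy m p :=
  Real.sqrt_pos.2 (by positivity)

@[fun_prop]
theorem continuous (m : ℝ) : Continuous (shellEnergy m : E → ℝ) := by
  unfold shellEnergy
  fun_prop

variable [InnerProductSpace ℝ E]

theorem sq_add_smul_sub_sq_sub_smul (m t : ℝ) (p n : E) :
    shellEnergy m (p + t • n) ^ 2 - shellEnergy m (p - t • n) ^ 2 = 4 * t * ⟪n, p⟫ := by
  rw [sq, sq, norm_add_sq_real, norm_sub_sq_real, real_inner_smul_right, real_inner_comm]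
  ring

theorem sq_norm_div_neg_minkowski_eq {m t : ℝ} (hm : m ≠ 0) (ht : t ≠ 0) {p n : E}
    (hn : ‖n‖ = 1) :
    ‖(p + t • n) - (p - t • n)‖ ^ 2 /
        (-((shellEnergy m (p + t • n) - shellEnergy m (p - t • n)) ^ 2
          - ‖(p + t • n) - (p - t • n)‖ ^ 2)) =
      (shellEnergy m (p + t • n) + shellEnergy m (p - t • n)) ^ 2 /
        ((shellEnergy m (p + t • n) + shellEnergy m (p - t • n)) ^ 2 - 4 * ⟪n, p⟫ ^ 2) := by
  have hnorm : ‖(p + t • n) - (p - t • n)‖ ^ 2 = 4 * t ^ 2 := by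
    rw [add_sub_sub_cancel, ← two_smul ℝ, smul_smul, norm_smul, hn, mul_one, Real.norm_eq_abs,
      sq_abs]
    ring
  rw [hnorm, neg_sub]
  refine div_sub_sq_eq_of_mul_eq ht (add_pos (pos hm _) (pos hm _)).ne' ?_
  rw [← sq_add_smul_sub_sq_sub_smul]
  ring

theorem tendsto_sq_norm_div_neg_minkowski {m : ℝ} (hm : m ≠ 0) {p n : E} (hn : ‖n‖ = 1) :
    Tendsto (fun t : ℝ => ‖(p + t • n) - (p - t • n)‖ ^ 2 /
        (-((shellEnergy m (p + t • n) - shellEnergy m (p - t • n)) ^ 2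
          - ‖(p + t • n) - (p - t • n)‖ ^ 2)))
      (𝓝[≠] 0) (𝓝 ((‖p‖ ^ 2 + m ^ 2) / (‖p‖ ^ 2 + m ^ 2 - ⟪n, p⟫ ^ 2))) := by
  set S : ℝ → ℝ := fun t => shellEnergy m (p + t • n) + shellEnergy m (p - t • n)
  have hS : Continuous S := by fun_prop
  have hS0 : S 0 ^ 2 = 4 * (‖p‖ ^ 2 + m ^ 2) := by
    simp only [S, zero_smul, add_zero, sub_zero, ← two_mul, mul_pow, sq]
    ring
  have hgap : 0 < ‖p‖ ^ 2 + m ^ 2 - ⟪n, p⟫ ^ 2 := by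
    have : 0 < m ^ 2 := by positivity
    linarith [sq_inner_le_sq_norm_of_norm_eq_one hn p]
  have hlim : Tendsto (fun t => S t ^ 2 / (S t ^ 2 - 4 * ⟪n, p⟫ ^ 2)) (𝓝 0)
      (𝓝 ((‖p‖ ^ 2 + m ^ 2) / (‖p‖ ^ 2 + m ^ 2 - ⟪n, p⟫ ^ 2))) := by
    have hval : S 0 ^ 2 / (S 0 ^ 2 - 4 * ⟪n, p⟫ ^ 2) =
        (‖p‖ ^ 2 + m ^ 2) / (‖p‖ ^ 2 + m ^ 2 - ⟪n, p⟫ ^ 2) := by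
      rw [hS0, ← mul_sub, mul_div_mul_left _ _ four_ne_zero]
    rw [← hval]
    refine ((hS.pow 2).continuousAt.div ((hS.pow 2).sub continuous_const).continuousAt ?_).tendsto
    change S 0 ^ 2 - 4 * ⟪n, p⟫ ^ 2 ≠ 0
    rw [hS0]
    linarith
  refine (hlim.mono_left nhdsWithin_le_nhds).congr' (eventually_nhdsWithin_of_forall fun t ht => ?_)
  exact (sq_norm_div_neg_minkowski_eq hm ht hn).symm

end shellEnergy

/-- Along the line through the diagonal point (𝐩,𝐩) in direction (𝐧,-𝐧), |𝐧|=1, m>0, the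
  ratio |𝐩₁-𝐩₂|²/(-(p₁-p₂)²) tends, as t → 0, to L = (|𝐩|²+m²)/(|𝐩|²+m²-⟨𝐧,𝐩⟩²); this
  limit lies between 1 and (|𝐩|²+m²)/m², attaining the maximum when 𝐧 is parallel to 𝐩
  and the minimum 1 when 𝐧 ⊥ 𝐩. -/
theorem stmt_17 (m : ℝ) (hm : 0 < m) (p n : EuclideanSpace ℝ (Fin 3)) (hn : ‖n‖ = 1) :
    Filter.Tendsto
      (fun t : ℝ =>
        ‖(p + t • n) - (p - t • n)‖ ^ 2 /
          (-((Real.sqrt (‖p + t • n‖ ^ 2 + m ^ 2)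
                - Real.sqrt (‖p - t • n‖ ^ 2 + m ^ 2)) ^ 2
              - ‖(p + t • n) - (p - t • n)‖ ^ 2)))
      (nhdsWithin 0 {(0 : ℝ)}ᶜ)
      (nhds ((‖p‖ ^ 2 + m ^ 2) / (‖p‖ ^ 2 + m ^ 2 - (inner ℝ n p : ℝ) ^ 2)))
    ∧ 1 ≤ (‖p‖ ^ 2 + m ^ 2) / (‖p‖ ^ 2 + m ^ 2 - (inner ℝ n p : ℝ) ^ 2)
    ∧ (‖p‖ ^ 2 + m ^ 2) / (‖p‖ ^ 2 + m ^ 2 - (inner ℝ n p : ℝ) ^ 2)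
        ≤ (‖p‖ ^ 2 + m ^ 2) / m ^ 2
    ∧ ((inner ℝ n p : ℝ) ^ 2 = ‖p‖ ^ 2 →
        (‖p‖ ^ 2 + m ^ 2) / (‖p‖ ^ 2 + m ^ 2 - (inner ℝ n p : ℝ) ^ 2)
          = (‖p‖ ^ 2 + m ^ 2) / m ^ 2)
    ∧ ((inner ℝ n p : ℝ) = 0 →
        (‖p‖ ^ 2 + m ^ 2) / (‖p‖ ^ 2 + m ^ 2 - (inner ℝ n p : ℝ) ^ 2) = 1) := by
  have hm2 : 0 < m ^ 2 := by positivity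
  have hgap : m ^ 2 ≤ ‖p‖ ^ 2 + m ^ 2 - ⟪n, p⟫ ^ 2 := by
    linarith [sq_inner_le_sq_norm_of_norm_eq_one hn p]
  refine ⟨shellEnergy.tendsto_sq_norm_div_neg_minkowski hm.ne' hn, ?_, ?_, ?_, ?_⟩
  · rw [one_le_div (hm2.trans_le hgap)]
    linarith [sq_nonneg ⟪n, p⟫]
  · exact div_le_div_of_nonneg_left (by positivity) hm2 hgap
  · intro h
    rw [h, add_sub_cancel_left]
  · intro h
    rw [h, zero_pow two_ne_zero, sub_zero, div_self (by positivity)]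
end
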